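/- Let v ∈ 𝒰(I) be a threshold utility satisfying: for all γ, δ > 0 there exist C ∈ ℝ and an increasing sequence (t_n) in v(I) with inf_n t_n > C/(1+δ), C − δt_n ∈ v(I) for all n, and lim_{n→∞} ( v^{−1}(t_n) + γ·v^{−1}(C − δt_n) ) = ∞. If ρ is a law-invariant, star-shaped monetary risk measure on 𝒳 that is v-SD-consistent, then its asymptotic functional satisfies ρ^∞(X) := lim_{n→∞} ρ(nX)/n = ρ^w(X) = ess sup(−X) for all X ∈ 𝒳. -/

import Mathlib

open MeasureTheory Filter Set

noncomputable section

namespace Paper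

variable {Ω : Type*} [MeasurableSpace Ω]

/-- The probability measure `P` is atomless. -/
def Atomless (P : Measure Ω) : Prop :=
  ∀ s : Set Ω, MeasurableSet s → 0 < P s →
    ∃ t : Set Ω, MeasurableSet t ∧ t ⊆ s ∧ 0 < P t ∧ P t < P s

/-- `𝒳`: the essentially bounded random variables. -/
def MemX (P : Measure Ω) (X : Ω → ℝ) : Prop :=
  Measurable X ∧ ∃ C : ℝ, ∀ᵐ ω ∂P, |X ω| ≤ C

/-- `𝒰(I)`: twice differentiable functions with everywhere positive first
derivative on `I`. -/
def IsUtility (I : Set ℝ) (u : ℝ → ℝ) : Prop :=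
  (∀ x ∈ I, DifferentiableAt ℝ u x) ∧
  (∀ x ∈ I, DifferentiableAt ℝ (deriv u) x) ∧
  (∀ x ∈ I, 0 < deriv u x)

/-- Arrow–Pratt coefficient of absolute risk aversion. -/
def RA (u : ℝ → ℝ) (x : ℝ) : ℝ := -deriv (deriv u) x / deriv u x

/-- `𝓛¹_v`: `I`-valued random variables `X` with `v(X)` integrable. -/
def MemL1 (P : Measure Ω) (I : Set ℝ) (v : ℝ → ℝ) (X : Ω → ℝ) : Prop :=
  Measurable X ∧ (∀ᵐ ω ∂P, X ω ∈ I) ∧ Integrable (fun ω => v (X ω)) P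

/-- The `v`-SD order: `X ≤_{v-SD} Y`. -/
def vSD (P : Measure Ω) (I : Set ℝ) (v : ℝ → ℝ) (X Y : Ω → ℝ) : Prop :=
  ∀ u : ℝ → ℝ, IsUtility I u → (∀ x ∈ I, RA v x ≤ RA u x) →
    Integrable (fun ω => u (X ω)) P → Integrable (fun ω => u (Y ω)) P →
    ∫ ω, u (X ω) ∂P ≤ ∫ ω, u (Y ω) ∂P

/-- Second-order stochastic dominance. -/
def SSD (P : Measure Ω) (X Y : Ω → ℝ) : Prop :=
  ∀ u : ℝ → ℝ, IsUtility Set.univ u → ConcaveOn ℝ Set.univ u →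
    Integrable (fun ω => u (X ω)) P → Integrable (fun ω => u (Y ω)) P →
    ∫ ω, u (X ω) ∂P ≤ ∫ ω, u (Y ω) ∂P

/-- Monetary risk measure: antitone and cash-additive on `𝒳`. -/
def IsRiskMeasure (P : Measure Ω) (ρ : (Ω → ℝ) → ℝ) : Prop :=
  (∀ X Y : Ω → ℝ, MemX P X → MemX P Y → (∀ᵐ ω ∂P, X ω ≤ Y ω) → ρ Y ≤ ρ X) ∧
  (∀ X : Ω → ℝ, MemX P X → ∀ c : ℝ, ρ (fun ω => X ω + c) = ρ X - c)

/-- Worst-case risk measure `ρ^w(X) = ess sup (-X)`. -/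
def rhoW (P : Measure Ω) (X : Ω → ℝ) : ℝ :=
  sInf {m : ℝ | ∀ᵐ ω ∂P, -X ω ≤ m}

/-- `v`-SD-consistency of `φ` on the domain `D`. -/
def VSDConsistent (P : Measure Ω) (I : Set ℝ) (v : ℝ → ℝ)
    (D : Set (Ω → ℝ)) (φ : (Ω → ℝ) → ℝ) : Prop :=
  ∀ X Y : Ω → ℝ, X ∈ D → Y ∈ D → MemL1 P I v X → MemL1 P I v Y →
    vSD P I v X Y → φ Y ≤ φ X

/-- `𝒞`: the a.s. strictly positive bounded random variables. -/
def MemC (P : Measure Ω) (X : Ω → ℝ) : Prop :=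
  MemX P X ∧ ∀ᵐ ω ∂P, 0 < X ω

/-- `𝓔 = {e^Y : Y ∈ 𝒳}` (up to a.s. equality). -/
def MemE (P : Measure Ω) (X : Ω → ℝ) : Prop :=
  ∃ Y : Ω → ℝ, MemX P Y ∧ ∀ᵐ ω ∂P, X ω = Real.exp (Y ω)

/-- Return risk measure. -/
def IsRRM (P : Measure Ω) (η : (Ω → ℝ) → ℝ) : Prop :=
  (∀ X : Ω → ℝ, MemC P X → 0 < η X) ∧
  (∀ X Y : Ω → ℝ, MemC P X → MemC P Y → (∀ᵐ ω ∂P, X ω ≤ Y ω) → η Y ≤ η X) ∧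
  (∀ X : Ω → ℝ, MemC P X → ∀ t : ℝ, 0 < t → η (fun ω => t * X ω) = t⁻¹ * η X)

/-- Loss-based return risk measure. -/
def IsLossRRM (P : Measure Ω) (κ : (Ω → ℝ) → ℝ) : Prop :=
  (∀ L : Ω → ℝ, MemC P L → 0 < κ L) ∧
  (∀ L L' : Ω → ℝ, MemC P L → MemC P L' → (∀ᵐ ω ∂P, L' ω ≤ L ω) → κ L' ≤ κ L) ∧
  (∀ L : Ω → ℝ, MemC P L → ∀ t : ℝ, 0 < t → κ (fun ω => t * L ω) = t * κ L)

/-- Base risk measure `ρ_{Z,v}`. -/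
def baseRM (P : Measure Ω) (v : ℝ → ℝ) (Z X : Ω → ℝ) : ℝ :=
  sInf {m : ℝ | vSD P Set.univ v Z (fun ω => X ω + m)}

/-- Lower quantile function. -/
def qf (P : Measure Ω) (X : Ω → ℝ) (r : ℝ) : ℝ :=
  sInf {x : ℝ | r ≤ (P {ω | X ω ≤ x}).toReal}

/-- Expected Shortfall at level `p`. -/
def ES (P : Measure Ω) (p : ℝ) (X : Ω → ℝ) : ℝ :=
  if p < 1 then -(1 / (1 - p)) * ∫ r in (0:ℝ)..(1 - p), qf P X r
  else rhoW P X

/-!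
`ρ(tX)/t` is nondecreasing in `t` by star-shapedness and bounded by `ess sup (-X)` by
monotonicity, so it suffices to bring it within `2ε` of `ess sup (-X)` for one `t > 0`.
Atomlessness gives an event `B` of probability `θ ∈ (0,1)` on which `X` is within `ε` of its
essential infimum, and Assumption (⋆) a lottery `Z` paying `a` on `B` and `b` off `B` whose
`v`-certainty equivalent `z` satisfies `γ (z - a) ≤ b - z` for a large `γ`. A utility more risk
averse than `v` is concave as a function of `v`, so `Z ≤_{v-SD} z` and consistency gives
`ρ Z ≥ -z`. An affine map `tX + s` sending the band near the essential infimum to `a` and an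
essential upper bound to `b` lies below `Z`, and the bound `ρ (tX) ≥ s - z` is the required one.
-/

section Utility

variable {I : Set ℝ} {u v : ℝ → ℝ}

lemma IsUtility.continuousOn (hv : IsUtility I v) : ContinuousOn v I :=
  fun x hx => (hv.1 x hx).continuousAt.continuousWithinAt

lemma IsUtility.strictMonoOn (hI : I.OrdConnected) (hv : IsUtility I v) : StrictMonoOn v I :=
  strictMonoOn_of_deriv_pos hI.convex hv.continuousOn
    fun x hx => hv.2.2 x (interior_subset hx)

lemma antitoneOn_deriv_div_deriv (hI : I.OrdConnected) (hv : IsUtility I v) (hu : IsUtility I u)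
    (hRA : ∀ x ∈ I, RA v x ≤ RA u x) : AntitoneOn (fun x => deriv u x / deriv v x) I := by
  have hdiff : ∀ x ∈ I, DifferentiableAt ℝ (fun x => deriv u x / deriv v x) x :=
    fun x hx => (hu.2.1 x hx).div (hv.2.1 x hx) (hv.2.2 x hx).ne'
  refine antitoneOn_of_deriv_nonpos hI.convex
    (fun x hx => (hdiff x hx).continuousAt.continuousWithinAt)
    (fun x hx => (hdiff x (interior_subset hx)).differentiableWithinAt) fun x hx => ?_
  have hxI := interior_subset hx
  have hv' := hv.2.2 x hxI
  have hRAx := hRA x hxI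
  rw [RA, RA, div_le_div_iff₀ hv' (hu.2.2 x hxI)] at hRAx
  rw [deriv_fun_div (hu.2.1 x hxI) (hv.2.1 x hxI) hv'.ne']
  exact div_nonpos_of_nonpos_of_nonneg (by linarith) (sq_nonneg _)

lemma exists_mul_deriv_eq_mul_deriv (hI : I.OrdConnected) (hv : IsUtility I v)
    (hu : IsUtility I u) {a b : ℝ} (ha : a ∈ I) (hb : b ∈ I) (hab : a < b) :
    ∃ ξ ∈ Ioo a b, (u b - u a) * deriv v ξ = (v b - v a) * deriv u ξ := by
  have hsub : Icc a b ⊆ I := hI.out ha hb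
  have hderiv {f : ℝ → ℝ} (hf : IsUtility I f) : ∀ x ∈ Ioo a b, HasDerivAt f (deriv f x) x :=
    fun x hx => (hf.1 x (hsub (Ioo_subset_Icc_self hx))).hasDerivAt
  exact exists_ratio_hasDerivAt_eq_ratio_slope v (deriv v) hab (hv.continuousOn.mono hsub)
    (hderiv hv) u (deriv u) (hu.continuousOn.mono hsub) (hderiv hu)

/-- `u ∘ v⁻¹` is concave: its slopes decrease. -/
lemma slope_mul_le_of_RA_le (hI : I.OrdConnected) (hv : IsUtility I v) (hu : IsUtility I u)
    (hRA : ∀ x ∈ I, RA v x ≤ RA u x) {a z b : ℝ} (ha : a ∈ I) (hb : b ∈ I) (haz : a < z)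
    (hzb : z < b) : (u b - u z) * (v z - v a) ≤ (u z - u a) * (v b - v z) := by
  have hz : z ∈ I := hI.out ha hb ⟨haz.le, hzb.le⟩
  obtain ⟨ξ, hξ, hξeq⟩ := exists_mul_deriv_eq_mul_deriv hI hv hu ha hz haz
  obtain ⟨η, hη, hηeq⟩ := exists_mul_deriv_eq_mul_deriv hI hv hu hz hb hzb
  have hξI : ξ ∈ I := hI.out ha hz (Ioo_subset_Icc_self hξ)
  have hηI : η ∈ I := hI.out hz hb (Ioo_subset_Icc_self hη)
  have hv'ξ := hv.2.2 ξ hξI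
  have hv'η := hv.2.2 η hηI
  have hratio := antitoneOn_deriv_div_deriv hI hv hu hRA hξI hηI (hξ.2.trans hη.1).le
  rw [div_le_div_iff₀ hv'η hv'ξ] at hratio
  have hva : 0 ≤ v z - v a := sub_nonneg.2 ((hv.strictMonoOn hI ha hz haz).le)
  have hvb : 0 ≤ v b - v z := sub_nonneg.2 ((hv.strictMonoOn hI hz hb hzb).le)
  refine le_of_mul_le_mul_right ?_ (mul_pos hv'ξ hv'η)
  calc (u b - u z) * (v z - v a) * (deriv v ξ * deriv v η)
      = (v z - v a) * (v b - v z) * (deriv u η * deriv v ξ) := by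
        linear_combination (v z - v a) * deriv v ξ * hηeq
    _ ≤ (v z - v a) * (v b - v z) * (deriv u ξ * deriv v η) := by gcongr
    _ = (u z - u a) * (v b - v z) * (deriv v ξ * deriv v η) := by
        linear_combination -(v b - v z) * deriv v η * hξeq

lemma weighted_utility_le_of_RA_le (hI : I.OrdConnected) (hv : IsUtility I v) (hu : IsUtility I u)
    (hRA : ∀ x ∈ I, RA v x ≤ RA u x) {a z b θ : ℝ} (ha : a ∈ I) (hb : b ∈ I) (haz : a < z)
    (hzb : z < b) (hvz : v z = θ * v a + (1 - θ) * v b) :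
    θ * u a + (1 - θ) * u b ≤ u z := by
  have hslope := slope_mul_le_of_RA_le hI hv hu hRA ha hb haz hzb
  have hvab : 0 < v b - v a := sub_pos.2 (hv.strictMonoOn hI ha hb (haz.trans hzb))
  rw [show v z - v a = (1 - θ) * (v b - v a) by linear_combination hvz,
    show v b - v z = θ * (v b - v a) by linear_combination -hvz] at hslope
  nlinarith

end Utility

/-- Assumption (⋆) of the paper, with `t n = v (x n)` and `v⁻¹ (C - δ t n) = y n`. -/
def SatisfiesStar (I : Set ℝ) (v : ℝ → ℝ) : Prop :=
  ∀ γ : ℝ, 0 < γ → ∀ δ : ℝ, 0 < δ → ∃ C : ℝ, ∃ x y : ℕ → ℝ,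
    (∀ n, x n ∈ I) ∧ (∀ n, y n ∈ I) ∧
    StrictMono (fun n => v (x n)) ∧
    (∀ n, C / (1 + δ) < v (x n)) ∧
    (∀ n, v (y n) = C - δ * v (x n)) ∧
    Tendsto (fun n => x n + γ * y n) atTop atTop

/-- The certainty equivalent is `z = v⁻¹ (C / (1 + δ))` for `θ = 1 / (1 + δ)`, and `a = y n`,
`b = x n` for `n` so large that `x n + γ y n ≥ (1 + γ) z`. -/
lemma SatisfiesStar.exists_lottery {I : Set ℝ} {v : ℝ → ℝ} (hv : IsUtility I v)
    (hI : I.OrdConnected) (hstar : SatisfiesStar I v) {θ γ : ℝ} (hθ0 : 0 < θ) (hθ1 : θ < 1)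
    (hγ : 0 < γ) : ∃ a z b : ℝ, a ∈ I ∧ b ∈ I ∧ a < z ∧ z < b ∧
      v z = θ * v a + (1 - θ) * v b ∧ γ * (z - a) ≤ b - z := by
  obtain ⟨δ, hδ, hδθ⟩ : ∃ δ > 0, δ * θ = 1 - θ :=
    ⟨(1 - θ) / θ, div_pos (sub_pos.2 hθ1) hθ0, div_mul_cancel₀ _ hθ0.ne'⟩
  obtain ⟨C, x, y, hxI, hyI, -, hvx, hvy, htend⟩ := hstar γ hγ δ hδ
  rw [show C / (1 + δ) = θ * C by
    rw [div_eq_iff (by positivity)]; linear_combination -C * hδθ] at hvx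
  have hvy_lt (n : ℕ) : v (y n) < θ * C := by
    have := mul_lt_mul_of_pos_left (hvx n) hδ
    rw [hvy n]
    linear_combination this - C * hδθ
  have hmono := hv.strictMonoOn hI
  obtain ⟨z, hz, hvz⟩ := intermediate_value_Ioo
    ((hmono.lt_iff_lt (hyI 0) (hxI 0)).1 ((hvy_lt 0).trans (hvx 0))).le
    (hv.continuousOn.mono (hI.out (hyI 0) (hxI 0))) ⟨hvy_lt 0, hvx 0⟩
  have hzI : z ∈ I := hI.out (hyI 0) (hxI 0) (Ioo_subset_Icc_self hz)
  obtain ⟨n, hn⟩ := (htend.eventually_ge_atTop ((1 + γ) * z)).exists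
  refine ⟨y n, z, x n, hyI n, hxI n, (hmono.lt_iff_lt (hyI n) hzI).1 (hvz ▸ hvy_lt n),
    (hmono.lt_iff_lt hzI (hxI n)).1 (hvz ▸ hvx n), ?_, by linarith⟩
  rw [hvz, hvy n]
  linear_combination v (x n) * hδθ

section Lottery

variable {P : Measure Ω} [IsProbabilityMeasure P] {B : Set Ω} [DecidablePred (· ∈ B)]

lemma integrable_comp_ite (hB : MeasurableSet B) (g : ℝ → ℝ) (a b : ℝ) :
    Integrable (fun ω => g (if ω ∈ B then a else b)) P := by
  simp_rw [apply_ite g]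
  exact Integrable.piecewise hB (integrable_const _).integrableOn (integrable_const _).integrableOn

lemma integral_comp_ite (hB : MeasurableSet B) (g : ℝ → ℝ) (a b : ℝ) :
    ∫ ω, g (if ω ∈ B then a else b) ∂P = P.real B * g a + (1 - P.real B) * g b := by
  simp_rw [apply_ite g]
  rw [← probReal_compl_eq_one_sub hB]
  exact (integral_piecewise hB (integrable_const _).integrableOn
    (integrable_const _).integrableOn).trans (by simp)

lemma vSD_ite_const {I : Set ℝ} {v : ℝ → ℝ} (hI : I.OrdConnected) (hv : IsUtility I v)
    (hB : MeasurableSet B) {a z b : ℝ} (ha : a ∈ I) (hb : b ∈ I) (haz : a < z) (hzb : z < b)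
    (hvz : v z = P.real B * v a + (1 - P.real B) * v b) :
    vSD P I v (fun ω => if ω ∈ B then a else b) (fun _ => z) := by
  intro u hu hRA _ _
  rw [integral_comp_ite hB, integral_const, probReal_univ, one_smul]
  exact weighted_utility_le_of_RA_le hI hv hu hRA ha hb haz hzb hvz

lemma memL1_const {I : Set ℝ} {v : ℝ → ℝ} {z : ℝ} (hz : z ∈ I) : MemL1 P I v (fun _ => z) :=
  ⟨measurable_const, ae_of_all _ fun _ => hz, integrable_const _⟩

lemma memL1_ite {I : Set ℝ} {v : ℝ → ℝ} (hB : MeasurableSet B) {a b : ℝ} (ha : a ∈ I)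
    (hb : b ∈ I) : MemL1 P I v (fun ω => if ω ∈ B then a else b) :=
  ⟨measurable_const.ite hB measurable_const, ae_of_all _ fun ω => by
    dsimp only; split_ifs
    exacts [ha, hb], integrable_comp_ite hB v a b⟩

end Lottery

section RiskMeasure

variable {P : Measure Ω} {ρ : (Ω → ℝ) → ℝ} {X Z : Ω → ℝ}

lemma memX_const (c : ℝ) : MemX P (fun _ => c) :=
  ⟨measurable_const, |c|, ae_of_all _ fun _ => le_rfl⟩

lemma memX_ite {B : Set Ω} [DecidablePred (· ∈ B)] (hB : MeasurableSet B) (a b : ℝ) :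
    MemX P (fun ω => if ω ∈ B then a else b) :=
  ⟨measurable_const.ite hB measurable_const, max |a| |b|, ae_of_all _ fun ω => by
    dsimp only; split_ifs
    exacts [le_max_left _ _, le_max_right _ _]⟩

lemma MemX.const_mul (hX : MemX P X) (t : ℝ) : MemX P (fun ω => t * X ω) := by
  obtain ⟨hXm, C, hC⟩ := hX
  refine ⟨hXm.const_mul t, |t| * C, hC.mono fun ω hω => ?_⟩
  rw [abs_mul]
  exact mul_le_mul_of_nonneg_left hω (abs_nonneg t)

lemma MemX.add_const (hX : MemX P X) (s : ℝ) : MemX P (fun ω => X ω + s) := by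
  obtain ⟨hXm, C, hC⟩ := hX
  exact ⟨hXm.add_const s, C + |s|, hC.mono fun ω hω => (abs_add_le _ _).trans (by linarith)⟩

lemma rhoW_eq_essSup : rhoW P X = essSup (fun ω => -X ω) P := rfl

lemma ae_neg_le_rhoW (hX : MemX P X) : ∀ᵐ ω ∂P, -X ω ≤ rhoW P X := by
  obtain ⟨-, C, hC⟩ := hX
  rw [rhoW_eq_essSup]
  exact ae_le_essSup (isBoundedUnder_of_eventually_le (a := C)
    (hC.mono fun ω hω => by linarith [(abs_le.mp hω).1]))

lemma measure_rhoW_sub_lt_neg_ne_zero [IsProbabilityMeasure P] (hX : MemX P X) {ε : ℝ}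
    (hε : 0 < ε) : P {ω | rhoW P X - ε < -X ω} ≠ 0 := by
  obtain ⟨-, C, hC⟩ := hX
  rw [rhoW_eq_essSup, ← frequently_ae_iff]
  exact frequently_lt_of_lt_limsup (isCoboundedUnder_le_of_eventually_le _ (x := -C)
    (hC.mono fun ω hω => by linarith [(abs_le.mp hω).2])) (sub_lt_self _ hε)

lemma IsRiskMeasure.apply_const (hρ : IsRiskMeasure P ρ) (hnorm : ρ (fun _ => 0) = 0) (c : ℝ) :
    ρ (fun _ => c) = -c := by
  simpa [hnorm] using hρ.2 _ (memX_const 0) c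

lemma IsRiskMeasure.add_le_of_ae_add_le (hρ : IsRiskMeasure P ρ) (hX : MemX P X)
    (hZ : MemX P Z) {s : ℝ} (h : ∀ᵐ ω ∂P, X ω + s ≤ Z ω) : ρ Z + s ≤ ρ X := by
  have := hρ.1 _ _ (hX.add_const s) hZ h
  rw [hρ.2 X hX s] at this
  linarith

lemma IsRiskMeasure.rho_smul_div_le_rhoW (hρ : IsRiskMeasure P ρ) (hnorm : ρ (fun _ => 0) = 0)
    (hX : MemX P X) {t : ℝ} (ht : 0 < t) : ρ (fun ω => t * X ω) / t ≤ rhoW P X := by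
  have h := hρ.1 _ _ (memX_const _) (hX.const_mul t) ((ae_neg_le_rhoW hX).mono fun ω hω =>
    show -(t * rhoW P X) ≤ t * X ω by nlinarith)
  rw [hρ.apply_const hnorm, neg_neg] at h
  rw [div_le_iff₀ ht]
  linarith

lemma rho_smul_div_le_of_le
    (hss : ∀ X : Ω → ℝ, MemX P X → ∀ l : ℝ, 1 ≤ l → l * ρ X ≤ ρ (fun ω => l * X ω))
    (hX : MemX P X) {s t : ℝ} (hs : 0 < s) (hst : s ≤ t) :
    ρ (fun ω => s * X ω) / s ≤ ρ (fun ω => t * X ω) / t := by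
  have h := hss _ (hX.const_mul s) (t / s) ((one_le_div hs).2 hst)
  simp_rw [← mul_assoc, div_mul_cancel₀ t hs.ne'] at h
  rw [div_le_div_iff₀ hs (hs.trans_le hst)]
  rw [div_mul_eq_mul_div, div_le_iff₀ hs] at h
  linarith

end RiskMeasure

lemma Atomless.exists_subset_measureReal_pos_lt_one {P : Measure Ω} [IsProbabilityMeasure P]
    (hP : Atomless P) {A : Set Ω} (hA : MeasurableSet A) (hA0 : P A ≠ 0) :
    ∃ B ⊆ A, MeasurableSet B ∧ 0 < P.real B ∧ P.real B < 1 := by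
  obtain ⟨B, hB, hBA, hB0, hB1⟩ := hP A hA (pos_iff_ne_zero.2 hA0)
  exact ⟨B, hBA, hB, ENNReal.toReal_pos hB0.ne' (measure_ne_top P B),
    ENNReal.toReal_lt_of_lt_ofReal (by simpa using hB1.trans_le prob_le_one)⟩

lemma neg_le_rho_ite {P : Measure Ω} [IsProbabilityMeasure P] {I : Set ℝ} (hI : I.OrdConnected)
    {v : ℝ → ℝ} (hv : IsUtility I v) {ρ : (Ω → ℝ) → ℝ} (hρ : IsRiskMeasure P ρ)
    (hnorm : ρ (fun _ => 0) = 0) (hcons : VSDConsistent P I v {X | MemX P X} ρ)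
    {B : Set Ω} [DecidablePred (· ∈ B)] (hB : MeasurableSet B) {a z b : ℝ} (ha : a ∈ I)
    (hb : b ∈ I) (haz : a < z) (hzb : z < b)
    (hvz : v z = P.real B * v a + (1 - P.real B) * v b) :
    -z ≤ ρ (fun ω => if ω ∈ B then a else b) := by
  have := hcons _ (fun _ => z) (memX_ite hB a b) (memX_const z) (memL1_ite hB ha hb)
    (memL1_const (hI.out ha hb ⟨haz.le, hzb.le⟩)) (vSD_ite_const hI hv hB ha hb haz hzb hvz)
  rwa [hρ.apply_const hnorm] at this

lemma ae_mul_add_le_ite {P : Measure Ω} {X : Ω → ℝ} {B : Set Ω} [DecidablePred (· ∈ B)]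
    {c d t lo hi : ℝ} (hXB : ∀ ω ∈ B, X ω ≤ c) (hXd : ∀ᵐ ω ∂P, X ω ≤ d) (ht : 0 ≤ t)
    (htcd : t * (d - c) = hi - lo) :
    ∀ᵐ ω ∂P, t * X ω + (hi - t * d) ≤ if ω ∈ B then lo else hi := by
  filter_upwards [hXd] with ω hω
  by_cases hωB : ω ∈ B
  · have := mul_le_mul_of_nonneg_left (hXB ω hωB) ht
    rw [if_pos hωB]
    linarith
  · have := mul_le_mul_of_nonneg_left hω ht
    rw [if_neg hωB]
    linarith

lemma exists_le_rho_smul_div {P : Measure Ω} [IsProbabilityMeasure P] (hP : Atomless P)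
    {I : Set ℝ} (hI : I.OrdConnected) {v : ℝ → ℝ} (hv : IsUtility I v)
    (hstar : SatisfiesStar I v) {ρ : (Ω → ℝ) → ℝ} (hρ : IsRiskMeasure P ρ)
    (hnorm : ρ (fun _ => 0) = 0) (hcons : VSDConsistent P I v {X | MemX P X} ρ)
    {X : Ω → ℝ} (hX : MemX P X) {a : ℝ} (ha : a < rhoW P X) :
    ∃ t > 0, a ≤ ρ (fun ω => t * X ω) / t := by
  classical
  set M := rhoW P X
  obtain ⟨ε, hε, rfl⟩ : ∃ ε > 0, a = M - 2 * ε := ⟨(M - a) / 2, by linarith, by ring⟩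
  obtain ⟨B, hBA, hB, hθ0, hθ1⟩ := hP.exists_subset_measureReal_pos_lt_one
    (measurableSet_lt measurable_const hX.1.neg) (measure_rhoW_sub_lt_neg_ne_zero hX hε)
  obtain ⟨d, hd, hXd⟩ : ∃ d, ε < d + M - ε ∧ ∀ᵐ ω ∂P, X ω ≤ d := by
    obtain ⟨-, C, hC⟩ := hX
    exact ⟨max C (3 * ε - M), by linarith [le_max_right C (3 * ε - M)],
      hC.mono fun ω hω => (le_abs_self _).trans (hω.trans (le_max_left _ _))⟩
  set K := d + M - ε
  have hK : 0 < K := hε.trans hd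
  obtain ⟨lo, z, hi, hlo, hhi, hloz, hzhi, hvz, hγ⟩ :=
    hstar.exists_lottery hv hI hθ0 hθ1 (div_pos hK hε)
  set t := (hi - lo) / K
  have ht : 0 < t := div_pos (by linarith) hK
  have htK : t * K = hi - lo := div_mul_cancel₀ _ hK.ne'
  have hdom := ae_mul_add_le_ite (X := X) (c := ε - M) (d := d) (lo := lo) (hi := hi)
    (fun ω hω => by linarith [show M - ε < -X ω from hBA hω]) hXd ht.le
    (by rw [show d - (ε - M) = K by ring, htK])
  have hρZ := neg_le_rho_ite hI hv hρ hnorm hcons hB hlo hhi hloz hzhi hvz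
  have hρtX := hρ.add_le_of_ae_add_le (hX.const_mul t) (memX_ite hB lo hi) hdom
  have hzt : z - lo ≤ t * ε := calc
    z - lo = K / ε * (z - lo) * ε / K := by field_simp
    _ ≤ (hi - lo) * ε / K := by gcongr; linarith
    _ = t * ε := by ring
  refine ⟨t, ht, ?_⟩
  rw [le_div_iff₀ ht]
  calc (M - 2 * ε) * t = t * K - t * d - t * ε := by ring
    _ ≤ -z + (hi - t * d) := by linarith
    _ ≤ ρ (fun ω => if ω ∈ B then lo else hi) + (hi - t * d) := by linarith
    _ ≤ ρ (fun ω => t * X ω) := hρtX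

theorem statement16_general (P : Measure Ω) [IsProbabilityMeasure P] (hP : Atomless P)
    (I : Set ℝ) (hIconn : I.OrdConnected)
    (v : ℝ → ℝ) (hv : IsUtility I v)
    (hstar : ∀ γ : ℝ, 0 < γ → ∀ δ : ℝ, 0 < δ → ∃ C : ℝ, ∃ x y : ℕ → ℝ,
      (∀ n, x n ∈ I) ∧ (∀ n, y n ∈ I) ∧
      StrictMono (fun n => v (x n)) ∧
      (∀ n, C / (1 + δ) < v (x n)) ∧
      (∀ n, v (y n) = C - δ * v (x n)) ∧
      Tendsto (fun n => x n + γ * y n) atTop atTop)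
    (ρ : (Ω → ℝ) → ℝ) (hρ : IsRiskMeasure P ρ)
    (hnorm : ρ (fun _ => 0) = 0)
    (hss : ∀ X : Ω → ℝ, MemX P X → ∀ l : ℝ, 1 ≤ l →
      l * ρ X ≤ ρ (fun ω => l * X ω))
    (hcons : VSDConsistent P I v {X | MemX P X} ρ) :
    ∀ X : Ω → ℝ, MemX P X →
      Tendsto (fun n : ℕ => ρ (fun ω => (n : ℝ) * X ω) / (n : ℝ)) atTop
        (nhds (rhoW P X)) := by
  intro X hX
  refine tendsto_order.2 ⟨fun a ha => ?_, fun b hb => ?_⟩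
  · obtain ⟨a', haa', ha'⟩ := exists_between ha
    obtain ⟨t, ht, hat⟩ := exists_le_rho_smul_div hP hIconn hv hstar hρ hnorm hcons hX ha'
    filter_upwards [eventually_ge_atTop ⌈t⌉₊] with n hn
    have htn : t ≤ n := (Nat.le_ceil t).trans (Nat.cast_le.2 hn)
    exact haa'.trans_le (hat.trans (rho_smul_div_le_of_le hss hX ht htn))
  · filter_upwards [eventually_gt_atTop 0] with n hn
    exact (hρ.rho_smul_div_le_rhoW hnorm hX (Nat.cast_pos.2 hn)).trans_lt hb

/-- Suppose the threshold utility `v ∈ 𝒰(I)` satisfies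
Assumption (star): for all `γ, δ > 0` there are `C ∈ ℝ` and an increasing
sequence `(t_n) = (v (x n))` in `v(I)` with `inf_n t_n > C / (1 + δ)`,
`C - δ t_n ∈ v(I)` (witnessed by `y n ∈ I` with `v (y n) = C - δ t n`), and
`v⁻¹(t_n) + γ v⁻¹(C - δ t_n) = x n + γ y n → ∞`. If `ρ` is a law-invariant,
star-shaped monetary risk measure on `𝒳` which is `v`-SD-consistent, then its
asymptotic functional is the worst-case risk measure:
`ρ(nX)/n → ρ^w(X)` for every `X ∈ 𝒳`. -/
theorem statement16 (P : Measure Ω) [IsProbabilityMeasure P] (hP : Atomless P)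
    (I : Set ℝ) (hIopen : IsOpen I) (hIconn : I.OrdConnected) (hIne : I.Nonempty)
    (v : ℝ → ℝ) (hv : IsUtility I v)
    (hstar : ∀ γ : ℝ, 0 < γ → ∀ δ : ℝ, 0 < δ → ∃ C : ℝ, ∃ x y : ℕ → ℝ,
      (∀ n, x n ∈ I) ∧ (∀ n, y n ∈ I) ∧
      StrictMono (fun n => v (x n)) ∧
      (∀ n, C / (1 + δ) < v (x n)) ∧
      (∀ n, v (y n) = C - δ * v (x n)) ∧
      Tendsto (fun n => x n + γ * y n) atTop atTop)
    (ρ : (Ω → ℝ) → ℝ) (hρ : IsRiskMeasure P ρ)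
    (hlaw : ∀ X Y : Ω → ℝ, MemX P X → MemX P Y → P.map X = P.map Y → ρ X = ρ Y)
    (hnorm : ρ (fun _ => 0) = 0)
    (hss : ∀ X : Ω → ℝ, MemX P X → ∀ l : ℝ, 1 ≤ l →
      l * ρ X ≤ ρ (fun ω => l * X ω))
    (hcons : VSDConsistent P I v {X | MemX P X} ρ) :
    ∀ X : Ω → ℝ, MemX P X →
      Tendsto (fun n : ℕ => ρ (fun ω => (n : ℝ) * X ω) / (n : ℝ)) atTop
        (nhds (rhoW P X)) :=
  statement16_general P hP I hIconn v hv hstar ρ hρ hnorm hss hcons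

end Paper
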